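/- arXiv:2102.05142 — 2 statements merged into one kernel-verified Lean document; each statement's English description precedes it below -/
import Mathlib

section
/- Let q be a prime power, let d ≥ 2 and 0 < m < d, let W be an m-dimensional subspace of 𝔽_q^d, and let H be the setwise stabilizer of W in GL_d(𝔽_q). If r > 1 is an integer dividing q^d − 1 with gcd(r, q^i − 1) = 1 for every 1 ≤ i < d, then r does not divide |H|. -/
/-!
Let `p` be a prime factor of `r`. Since `p ∣ q ^ d - 1`, `p` is not the characteristic, and by
hypothesis it divides no `q ^ i - 1` with `0 < i < d`; so it divides neither
`|GL_m(𝔽_q)|` nor `|GL_{d-m}(𝔽_q)|`. If `p` divided `|H|`, Cauchy would give `g ∈ H` of order `p`.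
Its actions on `W` and on `V ⧸ W` have order dividing `p` in these groups, hence are trivial,
so `g = 1 + N` with `N ^ 2 = 0`. Then `1 = g ^ p = 1 + p N` forces `N = 0`, as `p` is invertible
in `𝔽_q`: a contradiction.
-/

open Module Pointwise MulAction

instance LinearEquiv.finite {R M M₂ : Type*} [Semiring R] [AddCommMonoid M] [AddCommMonoid M₂]
    [Module R M] [Module R M₂] [Finite M] [Finite M₂] : Finite (M ≃ₗ[R] M₂) :=
  Finite.of_injective _ DFunLike.coe_injective

lemma Nat.Prime.not_dvd_of_dvd_pow_sub_one {p q d : ℕ} (hp : p.Prime) (hq : 0 < q) (hd : d ≠ 0)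
    (h : p ∣ q ^ d - 1) : ¬ p ∣ q := by
  intro hpq
  have hpow : p ∣ q ^ d := hpq.trans (dvd_pow_self q hd)
  have : p ∣ 1 := by
    simpa [Nat.sub_sub_self (Nat.one_le_pow d q hq)] using Nat.dvd_sub hpow h
  exact hp.one_lt.ne' (Nat.dvd_one.1 this)

lemma FiniteField.natCast_ne_zero_of_not_dvd_card {F : Type*} [Field F] [Fintype F] {p : ℕ}
    (hp : p.Prime) (h : ¬ p ∣ Fintype.card F) : (p : F) ≠ 0 := by
  intro hp0
  have hcharp : ringChar F ∣ p := (CharP.cast_eq_zero_iff F (ringChar F) p).1 hp0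
  have hcharq : ringChar F ∣ Fintype.card F :=
    (CharP.cast_eq_zero_iff F (ringChar F) _).1 (FiniteField.cast_card_eq_zero F)
  rw [(Nat.prime_dvd_prime_iff_eq (CharP.char_is_prime F (ringChar F)) hp).1 hcharp] at hcharq
  exact h hcharq

lemma Matrix.not_dvd_card_GL_field {F : Type*} [Field F] [Fintype F] {p n : ℕ} (hp : p.Prime)
    (hpq : ¬ p ∣ Fintype.card F)
    (hpow : ∀ i, 1 ≤ i → i ≤ n → ¬ p ∣ Fintype.card F ^ i - 1) :
    ¬ p ∣ Nat.card (GL (Fin n) F) := by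
  rw [Matrix.card_GL_field, Prime.dvd_finsetProd_iff hp.prime]
  rintro ⟨i, -, hdvd⟩
  have hfactor : Fintype.card F ^ n - Fintype.card F ^ (i : ℕ) =
      Fintype.card F ^ (i : ℕ) * (Fintype.card F ^ (n - i) - 1) := by
    rw [Nat.mul_sub, mul_one, ← pow_add, Nat.add_sub_cancel' i.2.le]
  rw [hfactor] at hdvd
  rcases hp.dvd_mul.1 hdvd with h | h
  · exact hpq (hp.dvd_of_dvd_pow h)
  · exact hpow (n - i) (by omega) (by omega) h

namespace LinearEquiv

section Card

variable {F M : Type*} [Field F] [AddCommGroup M] [Module F M] [Module.Finite F M] {n : ℕ}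

lemma card_eq_card_GL (h : finrank F M = n) : Nat.card (M ≃ₗ[F] M) = Nat.card (GL (Fin n) F) :=
  Nat.card_congr ((LinearMap.GeneralLinearGroup.generalLinearEquiv F M).symm.trans
    (Units.mapEquiv (LinearMap.toMatrixAlgEquiv (finBasisOfFinrankEq F M h)).toMulEquiv)).toEquiv

lemma not_dvd_card_of_finrank_eq [Fintype F] (h : finrank F M = n) {p : ℕ} (hp : p.Prime)
    (hpq : ¬ p ∣ Fintype.card F)
    (hpow : ∀ i, 1 ≤ i → i ≤ n → ¬ p ∣ Fintype.card F ^ i - 1) :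
    ¬ p ∣ Nat.card (M ≃ₗ[F] M) :=
  card_eq_card_GL h ▸ Matrix.not_dvd_card_GL_field hp hpq hpow

end Card

section Ring

variable {R V : Type*} [Ring R] [AddCommGroup V] [Module R V] (W : Submodule R V)

lemma map_eq_of_mem_stabilizer {u : V ≃ₗ[R] V} (hu : u ∈ stabilizer (V ≃ₗ[R] V) W) :
    W.map (u : V →ₗ[R] V) = W :=
  Submodule.mem_stabilizer_submodule_iff_map_eq.1 hu

def restrictStabilizer : stabilizer (V ≃ₗ[R] V) W →* (W ≃ₗ[R] W) where
  toFun u := u.val.ofSubmodules W W (map_eq_of_mem_stabilizer W u.prop)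
  map_one' := rfl
  map_mul' _ _ := rfl

variable {W}

lemma pow_apply_eq_add_nsmul {u : V ≃ₗ[R] V} (hW : ∀ w ∈ W, u w = w) (hV : ∀ x, u x - x ∈ W)
    (n : ℕ) (x : V) : (u ^ n) x = x + n • (u x - x) := by
  induction n with
  | zero => simp
  | succ n ih =>
    rw [pow_succ', mul_apply, ih, map_add, map_nsmul, hW _ (hV x), succ_nsmul]
    abel

end Ring

variable {K V : Type*} [DivisionRing K] [AddCommGroup V] [Module K V] {W : Submodule K V}

lemma eq_one_of_restrictStabilizer_eq_one_of_reduce_eq_one {u : stabilizer (V ≃ₗ[K] V) W}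
    (hres : restrictStabilizer W u = 1) (hred : reduce W u = 1) {n : ℕ} (hn : (n : K) ≠ 0)
    (hu : u ^ n = 1) : u = 1 := by
  have hW : ∀ w ∈ W, u.val w = w := fun w hw =>
    congrArg Subtype.val (LinearEquiv.congr_fun hres ⟨w, hw⟩)
  have hV : ∀ x, u.val x - x ∈ W := fun x =>
    (Submodule.Quotient.eq W).1 (LinearEquiv.congr_fun hred (Submodule.Quotient.mk x))
  ext x
  have hx : (u.val ^ n) x = x := by rw [← Subgroup.coe_pow, hu]; rfl
  rw [pow_apply_eq_add_nsmul hW hV, add_eq_left, ← Nat.cast_smul_eq_nsmul K, smul_eq_zero,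
    sub_eq_zero] at hx
  exact hx.resolve_left hn

end LinearEquiv

lemma eq_one_of_pow_eq_one_of_not_dvd_card {G : Type*} [Group G] {p : ℕ} (hp : p.Prime)
    (hG : ¬ p ∣ Nat.card G) {g : G} (hg : g ^ p = 1) : g = 1 :=
  (Nat.Coprime.pow_left_bijective (hp.coprime_iff_not_dvd.2 hG).symm).1 (by simp [hg])

namespace Submodule

open LinearEquiv

theorem not_dvd_card_stabilizer {K V : Type*} [DivisionRing K] [AddCommGroup V] [Module K V]
    [Finite V] (W : Submodule K V) {p : ℕ} (hp : p.Prime) (hpK : (p : K) ≠ 0)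
    (hW : ¬ p ∣ Nat.card (W ≃ₗ[K] W)) (hQ : ¬ p ∣ Nat.card ((V ⧸ W) ≃ₗ[K] (V ⧸ W))) :
    ¬ p ∣ Nat.card (stabilizer (V ≃ₗ[K] V) W) := by
  intro hdvd
  have : Fact p.Prime := ⟨hp⟩
  obtain ⟨u, hu⟩ := exists_prime_orderOf_dvd_card' p hdvd
  have hup : u ^ p = 1 := hu ▸ pow_orderOf_eq_one u
  have hu1 : u = 1 := eq_one_of_restrictStabilizer_eq_one_of_reduce_eq_one
    (eq_one_of_pow_eq_one_of_not_dvd_card hp hW (by rw [← map_pow, hup, map_one]))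
    (eq_one_of_pow_eq_one_of_not_dvd_card hp hQ (by rw [← map_pow, hup, map_one])) hpK hup
  rw [hu1, orderOf_one] at hu
  exact hp.one_lt.ne hu

lemma ncard_setOf_map_eq {R V : Type*} [Ring R] [AddCommGroup V] [Module R V]
    (W : Submodule R V) :
    Set.ncard {g : V ≃ₗ[R] V | W.map (g : V →ₗ[R] V) = W} =
      Nat.card (stabilizer (V ≃ₗ[R] V) W) := by
  rw [← Nat.card_coe_set_eq]
  rfl

end Submodule

theorem stmt_12_general (F : Type) [Field F] [Fintype F] (d m : ℕ)
    (hm0 : 0 < m) (hmd : m < d)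
    (W : Submodule F (Fin d → F)) (hW : finrank F W = m)
    (r : ℕ) (hr : 1 < r) (hdvd : r ∣ Fintype.card F ^ d - 1)
    (hprim : ∀ i, 1 ≤ i → i < d → Nat.gcd r (Fintype.card F ^ i - 1) = 1) :
    ¬ r ∣ Set.ncard {g : (Fin d → F) ≃ₗ[F] (Fin d → F) |
        W.map (g : (Fin d → F) →ₗ[F] (Fin d → F)) = W} := by
  obtain ⟨p, hp, hpr⟩ := Nat.exists_prime_and_dvd hr.ne'
  have hpq : ¬ p ∣ Fintype.card F :=
    hp.not_dvd_of_dvd_pow_sub_one Fintype.card_pos (by omega) (hpr.trans hdvd)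
  have hpow : ∀ i, 1 ≤ i → i < d → ¬ p ∣ Fintype.card F ^ i - 1 := fun i hi hid hpi =>
    hp.one_lt.ne' (Nat.dvd_one.1 (hprim i hi hid ▸ Nat.dvd_gcd hpr hpi))
  have hQ : finrank F ((Fin d → F) ⧸ W) = d - m := by
    rw [← hW, Submodule.finrank_quotient, finrank_fin_fun]
  rw [Submodule.ncard_setOf_map_eq]
  exact fun h => W.not_dvd_card_stabilizer hp
    (FiniteField.natCast_ne_zero_of_not_dvd_card hp hpq)
    (LinearEquiv.not_dvd_card_of_finrank_eq hW hp hpq fun i hi hin => hpow i hi (by omega))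
    (LinearEquiv.not_dvd_card_of_finrank_eq hQ hp hpq fun i hi hin => hpow i hi (by omega))
    (hpr.trans h)

theorem stmt_12 (F : Type) [Field F] [Fintype F] (d m : ℕ)
    (hd : 2 ≤ d) (hm0 : 0 < m) (hmd : m < d)
    (W : Submodule F (Fin d → F)) (hW : finrank F W = m)
    (r : ℕ) (hr : 1 < r) (hdvd : r ∣ Fintype.card F ^ d - 1)
    (hprim : ∀ i, 1 ≤ i → i < d → Nat.gcd r (Fintype.card F ^ i - 1) = 1) :
    ¬ r ∣ Set.ncard {g : (Fin d → F) ≃ₗ[F] (Fin d → F) |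
        W.map (g : (Fin d → F) →ₗ[F] (Fin d → F)) = W} :=
  stmt_12_general F d m hm0 hmd W hW r hr hdvd hprim
end

section
/- Let q ≥ 2 be an integer and d = 2m an even integer with m ≥ 2. If r > 1 is an integer dividing q^{d−1} − 1 with gcd(r, q^i − 1) = 1 for every 1 ≤ i < d−1, then r does not divide 2 · q^{m(m−1)} · (∏_{i=1}^{m−1} (q^{2i} − 1)) · (q^m − 1), and r does not divide 2 · q^{m(m−1)} · (∏_{i=1}^{m−1} (q^{2i} − 1)) · (q^m + 1). (These products are the orders of the orthogonal groups GO_{2m}^+(q) and GO_{2m}^-(q); hence no non-trivial primitive divisor of q^{d−1} − 1 divides |GO_d^±(q)|.) -/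
/-!
Every factor of `|GO_{2m}^±(q)|` is coprime to `r`. The factors `q ^ i - 1` with `i < 2m - 1` are so
by primitivity; `q` is so because `r ∣ q ^ (2m - 1) - 1`; and `2` is so because `2` divides
`q (q - 1)`. The remaining factor `q ^ m + 1` divides `q ^ (2m) - 1`, and
`gcd (q ^ (2m - 1) - 1, q ^ (2m) - 1) = q ^ gcd (2m - 1, 2m) - 1 = q - 1`, which is coprime to `r`.
-/

namespace Nat

variable {q r : ℕ}

lemma coprime_of_dvd_pow_sub_one {n : ℕ} (hq : q ≠ 0) (hn : n ≠ 0) (h : r ∣ q ^ n - 1) :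
    Coprime r q := by
  have hconsec : Coprime (q ^ n - 1) (q ^ n) :=
    (coprime_self_sub_left (one_le_pow _ _ (pos_of_ne_zero hq))).2 (coprime_one_left _)
  exact (hconsec.coprime_dvd_left h).coprime_dvd_right (dvd_pow_self q hn)

lemma coprime_two_of_coprime_of_coprime_sub_one (h : Coprime r q) (h' : Coprime r (q - 1)) :
    Coprime r 2 :=
  (h.mul_right h').coprime_dvd_right (even_mul_pred_self q).two_dvd

lemma coprime_of_dvd_pow_sub_one_of_dvd_pow_sub_one {s a b : ℕ} (hab : Coprime a b)
    (hr : r ∣ q ^ a - 1) (hs : s ∣ q ^ b - 1) (h : Coprime r (q - 1)) : Coprime r s := by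
  have hgcd : gcd r s ∣ q - 1 := by
    simpa [hab.gcd_eq_one] using
      dvd_gcd ((gcd_dvd_left r s).trans hr) ((gcd_dvd_right r s).trans hs)
  exact eq_one_of_dvd_coprimes h (gcd_dvd_left r s) hgcd

lemma pow_add_one_dvd_pow_two_mul_sub_one (q m : ℕ) : q ^ m + 1 ∣ q ^ (2 * m) - 1 :=
  ⟨q ^ m - 1, by rw [pow_mul', ← Nat.sq_sub_sq, one_pow]⟩

end Nat

theorem stmt_14 (q m : ℕ) (hq : 2 ≤ q) (hm : 2 ≤ m)
    (r : ℕ) (hr : 1 < r) (hdvd : r ∣ q ^ (2 * m - 1) - 1)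
    (hprim : ∀ i, 1 ≤ i → i < 2 * m - 1 → Nat.gcd r (q ^ i - 1) = 1) :
    (¬ r ∣ 2 * q ^ (m * (m - 1)) * (∏ i ∈ Finset.Icc 1 (m - 1), (q ^ (2 * i) - 1)) * (q ^ m - 1)) ∧
    (¬ r ∣ 2 * q ^ (m * (m - 1)) * (∏ i ∈ Finset.Icc 1 (m - 1), (q ^ (2 * i) - 1)) * (q ^ m + 1)) := by
  have hprim' : ∀ i, 1 ≤ i → i < 2 * m - 1 → r.Coprime (q ^ i - 1) := hprim
  have hsub_one : r.Coprime (q - 1) := by simpa using hprim' 1 le_rfl (by omega)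
  have hself : r.Coprime q := Nat.coprime_of_dvd_pow_sub_one (by omega) (by omega) hdvd
  have hcommon :
      r.Coprime (2 * q ^ (m * (m - 1)) * ∏ i ∈ Finset.Icc 1 (m - 1), (q ^ (2 * i) - 1)) := by
    refine ((Nat.coprime_two_of_coprime_of_coprime_sub_one hself hsub_one).mul_right
      (hself.pow_right _)).mul_right (Nat.Coprime.prod_right fun i hi => ?_)
    rw [Finset.mem_Icc] at hi
    exact hprim' (2 * i) (by omega) (by omega)
  have hminus : r.Coprime (q ^ m - 1) := hprim' m (by omega) (by omega)
  have hplus : r.Coprime (q ^ m + 1) :=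
    Nat.coprime_of_dvd_pow_sub_one_of_dvd_pow_sub_one
      ((Nat.coprime_self_sub_left (by omega)).2 (Nat.coprime_one_left _)) hdvd
      (Nat.pow_add_one_dvd_pow_two_mul_sub_one q m) hsub_one
  exact ⟨fun h => hr.ne' ((hcommon.mul_right hminus).eq_one_of_dvd h),
    fun h => hr.ne' ((hcommon.mul_right hplus).eq_one_of_dvd h)⟩
end
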